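/- arXiv:2102.05375 — 5 statements merged into one kernel-verified Lean document; each statement's English description precedes it below -/
import Mathlib

section
/- For minibatch sampling with replacement of batch size S from N items, let s_n denote the number of times item n appears in the batch, where the batch is drawn uniformly from multisets of size S (combinations with repetition). Then E[s_n] = S/N, E[s_n s_{n'}] = S(S−1)/(N(N+1)) for n ≠ n', and E[s_n²] = S(N+2S−1)/(N(N+1)). -/
lemma key (N S : ℕ) (n : Fin N) (f : Multiset (Fin N) → ℚ) :
    ∑ m : Sym (Fin N) (S+1), (Multiset.count n (m : Multiset (Fin N)) : ℚ) * f ↑m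
      = ∑ m : Sym (Fin N) S,
          ((Multiset.count n (m : Multiset (Fin N)) : ℚ) + 1) * f (n ::ₘ ↑m) := by
  rw [← Finset.sum_filter_of_ne (p := fun m : Sym (Fin N) (S+1) => n ∈ m)
    (by intro m _ h
        by_contra hmem
        apply h
        have : Multiset.count n (m : Multiset (Fin N)) = 0 :=
          Multiset.count_eq_zero.2 hmem
        simp [this])]
  refine Finset.sum_nbij'
    (fun m => if h : n ∈ m then m.erase n h else Sym.replicate S n)
    (fun m => n ::ₛ m) ?_ ?_ ?_ ?_ ?_
  · intros; simp
  · intro m _; simp [Finset.mem_filter, Sym.mem_cons]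
  · intro m hm
    simp only [Finset.mem_filter] at hm
    simp only [dif_pos hm.2, Sym.cons_erase]
  · intro m _
    have hmem : n ∈ n ::ₛ m := Sym.mem_cons.2 (Or.inl rfl)
    simp only [dif_pos hmem]
    exact Sym.erase_cons_head m n
  · intro m hm
    simp only [Finset.mem_filter] at hm
    simp only [dif_pos hm.2, Sym.coe_erase]
    have h1 : (Multiset.count n ((m:Multiset (Fin N)).erase n) : ℚ) + 1
        = Multiset.count n (m : Multiset (Fin N)) := by
      rw [Multiset.count_erase_self]
      have : 1 ≤ Multiset.count n (m : Multiset (Fin N)) := Multiset.count_pos.2 hm.2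
      rw [Nat.cast_sub this]
      push_cast; ring
    rw [h1, show (n ::ₘ ((m:Multiset (Fin N))).erase n) = (m:Multiset (Fin N)) from
      Multiset.cons_erase hm.2]

lemma cardrec (N S : ℕ) (hN : 0 < N) :
    ((N:ℚ) + S) * (Fintype.card (Sym (Fin N) S) : ℚ)
      = ((S:ℚ) + 1) * (Fintype.card (Sym (Fin N) (S+1)) : ℚ) := by
  have h1 : Fintype.card (Sym (Fin N) S) = (N + S - 1).choose S := by
    rw [Sym.card_sym_eq_multichoose, Fintype.card_fin, Nat.multichoose_eq]
  have h2 : Fintype.card (Sym (Fin N) (S+1)) = (N + S).choose (S+1) := by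
    rw [Sym.card_sym_eq_multichoose, Fintype.card_fin, Nat.multichoose_eq]
    congr 1
  have key : (N + S) * (N + S - 1).choose S = (N + S).choose (S+1) * (S+1) := by
    have := Nat.add_one_mul_choose_eq (N + S - 1) S
    have hNS : N + S - 1 + 1 = N + S := by omega
    simp only [Nat.succ_eq_add_one, hNS] at this
    exact this
  rw [h1, h2]
  have := congrArg (fun x : ℕ => (x : ℚ)) key
  push_cast at this ⊢
  linarith

lemma sumzero (N : ℕ) (n : Fin N) (g : ℕ → ℚ) (hg : g 0 = 0) :
    ∑ m : Sym (Fin N) 0, g (Multiset.count n (m : Multiset (Fin N))) = 0 := by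
  apply Finset.sum_eq_zero
  intro m _
  have : (m : Multiset (Fin N)) = 0 := Multiset.card_eq_zero.1 m.2
  simp [this, hg]

lemma lemA (N : ℕ) (hN : 0 < N) : ∀ S : ℕ, ∀ n : Fin N,
    (N:ℚ) * ∑ m : Sym (Fin N) S, (Multiset.count n (m : Multiset (Fin N)) : ℚ)
      = S * (Fintype.card (Sym (Fin N) S) : ℚ) := by
  intro S
  induction S with
  | zero => intro n; rw [sumzero N n (fun k => (k:ℚ)) (by simp)]; simp
  | succ S ih =>
    intro n
    have hk := key N S n (fun _ => 1)
    simp only [mul_one] at hk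
    rw [hk, Finset.sum_add_distrib, Finset.sum_const, Finset.card_univ, mul_add,
      ih n, nsmul_eq_mul, mul_one]
    have := cardrec N S hN
    push_cast
    linarith

lemma lemB (N : ℕ) (hN : 0 < N) (n n' : Fin N) (hnn : n ≠ n') : ∀ S : ℕ,
    ((N:ℚ) * ((N:ℚ)+1)) * ∑ m : Sym (Fin N) S,
        (Multiset.count n (m : Multiset (Fin N)) : ℚ)
          * (Multiset.count n' (m : Multiset (Fin N)) : ℚ)
      = (S:ℚ) * ((S:ℚ) - 1) * (Fintype.card (Sym (Fin N) S) : ℚ) := by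
  intro S
  induction S with
  | zero =>
    have : ∑ m : Sym (Fin N) 0, (Multiset.count n (m : Multiset (Fin N)) : ℚ)
        * (Multiset.count n' (m : Multiset (Fin N)) : ℚ) = 0 := by
      apply Finset.sum_eq_zero
      intro m _
      have : (m : Multiset (Fin N)) = 0 := Multiset.card_eq_zero.1 m.2
      simp [this]
    rw [this]; simp
  | succ S ih =>
    have hk := key N S n (fun μ => (Multiset.count n' μ : ℚ))
    have hc : ∀ μ : Multiset (Fin N), Multiset.count n' (n ::ₘ μ) = Multiset.count n' μ :=
      fun μ => Multiset.count_cons_of_ne (Ne.symm hnn) μ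
    simp only [hc] at hk
    rw [hk]
    have expand : ∑ m : Sym (Fin N) S,
        ((Multiset.count n (m : Multiset (Fin N)) : ℚ) + 1)
          * (Multiset.count n' (m : Multiset (Fin N)) : ℚ)
      = (∑ m : Sym (Fin N) S, (Multiset.count n (m : Multiset (Fin N)) : ℚ)
          * (Multiset.count n' (m : Multiset (Fin N)) : ℚ))
        + ∑ m : Sym (Fin N) S, (Multiset.count n' (m : Multiset (Fin N)) : ℚ) := by
      rw [← Finset.sum_add_distrib]
      apply Finset.sum_congr rfl
      intros; ring
    rw [expand, mul_add, ih]
    have hA := lemA N hN S n'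
    have hcr := cardrec N S hN
    push_cast
    nlinarith [hA, hcr]

lemma lemD (N : ℕ) (hN : 0 < N) (n : Fin N) : ∀ S : ℕ,
    ((N:ℚ) * ((N:ℚ)+1)) * ∑ m : Sym (Fin N) S,
        (Multiset.count n (m : Multiset (Fin N)) : ℚ) ^ 2
      = (S:ℚ) * ((N:ℚ) + 2 * (S:ℚ) - 1) * (Fintype.card (Sym (Fin N) S) : ℚ) := by
  intro S
  induction S with
  | zero => rw [sumzero N n (fun k => (k:ℚ)^2) (by simp)]; simp
  | succ S ih =>
    have hk := key N S n (fun μ => (Multiset.count n μ : ℚ))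
    simp only [Multiset.count_cons_self] at hk
    have lhs_eq : ∑ m : Sym (Fin N) (S+1),
        (Multiset.count n (m : Multiset (Fin N)) : ℚ) ^ 2
      = ∑ m : Sym (Fin N) (S+1), (Multiset.count n (m : Multiset (Fin N)) : ℚ)
          * (Multiset.count n (m : Multiset (Fin N)) : ℚ) := by
      apply Finset.sum_congr rfl; intros; ring
    rw [lhs_eq, hk]
    have expand : ∑ m : Sym (Fin N) S,
        ((Multiset.count n (m : Multiset (Fin N)) : ℚ) + 1)
          * ((Multiset.count n (m : Multiset (Fin N)) : ℚ) + 1)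
      = (∑ m : Sym (Fin N) S, (Multiset.count n (m : Multiset (Fin N)) : ℚ) ^ 2)
        + 2 * (∑ m : Sym (Fin N) S, (Multiset.count n (m : Multiset (Fin N)) : ℚ))
        + (Fintype.card (Sym (Fin N) S) : ℚ) := by
      rw [Finset.mul_sum, ← Finset.sum_add_distrib, ← Finset.card_univ]
      rw [show ((Finset.univ.card : ℕ) : ℚ) = ∑ _m : Sym (Fin N) S, (1:ℚ) by simp]
      rw [← Finset.sum_add_distrib]
      apply Finset.sum_congr rfl
      intros; push_cast; ring
    have push_eq : ∀ m : Sym (Fin N) S,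
        ((Multiset.count n (m : Multiset (Fin N)) : ℚ) + 1)
        * ((Multiset.count n (m : Multiset (Fin N)) : ℕ) + 1 : ℕ)
      = ((Multiset.count n (m : Multiset (Fin N)) : ℚ) + 1)
        * ((Multiset.count n (m : Multiset (Fin N)) : ℚ) + 1) := by
      intro m; push_cast; ring
    simp only [push_eq] at *
    rw [expand]
    have hA := lemA N hN S n
    have hcr := cardrec N S hN
    push_cast
    nlinarith [hA, hcr]

/-- Moments of the multiplicity counts under uniform sampling of a size-`S`
multiset (combinations with repetition) from `N` items. -/
theorem stmt1 (N S : ℕ) (hN : 0 < N) (hS : 1 ≤ S) (n n' : Fin N) (hnn : n ≠ n') :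
    ((∑ m : Sym (Fin N) S, (Multiset.count n (m : Multiset (Fin N)) : ℚ)) /
        (Fintype.card (Sym (Fin N) S) : ℚ) = (S : ℚ) / N) ∧
    ((∑ m : Sym (Fin N) S,
        (Multiset.count n (m : Multiset (Fin N)) : ℚ) *
          (Multiset.count n' (m : Multiset (Fin N)) : ℚ)) /
        (Fintype.card (Sym (Fin N) S) : ℚ)
      = (S : ℚ) * ((S : ℚ) - 1) / ((N : ℚ) * ((N : ℚ) + 1))) ∧
    ((∑ m : Sym (Fin N) S, (Multiset.count n (m : Multiset (Fin N)) : ℚ) ^ 2) /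
        (Fintype.card (Sym (Fin N) S) : ℚ)
      = (S : ℚ) * ((N : ℚ) + 2 * (S : ℚ) - 1) / ((N : ℚ) * ((N : ℚ) + 1))) := by
  have hcard : (0:ℚ) < (Fintype.card (Sym (Fin N) S) : ℚ) := by
    have : Nonempty (Sym (Fin N) S) := ⟨Sym.replicate S n⟩
    exact_mod_cast Fintype.card_pos
  have hNq : (0:ℚ) < (N:ℚ) := by exact_mod_cast hN
  have hN1 : (0:ℚ) < (N:ℚ) * ((N:ℚ)+1) := by positivity
  refine ⟨?_, ?_, ?_⟩
  · rw [div_eq_div_iff hcard.ne' hNq.ne']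
    have := lemA N hN S n
    linarith
  · rw [div_eq_div_iff hcard.ne' hN1.ne']
    have := lemB N hN n n' hnn S
    linarith
  · rw [div_eq_div_iff hcard.ne' hN1.ne']
    have := lemD N hN n S
    linarith
end

section
/- Let A and Λ be commuting symmetric positive definite D×D matrices, μ ∈ [0,1), S ≥ 1, σ² > 0, and suppose G_μ := 2(1−μ)I − ((1−μ)/(1+μ) + 1/S)ΛA is positive definite with 1 − (1/S)Tr[ΛAG_μ⁻¹] > 0. Then Σ := (σ²/S)(1 + κ_μ/S) Λ G_μ⁻¹, with κ_μ := Tr[ΛAG_μ⁻¹]/(1 − (1/S)Tr[ΛAG_μ⁻¹]), satisfies the matrix equation (1−μ)(ΛAΣ + ΣAΛ) − ((1+μ²)/(1−μ²))ΛAΣAΛ + (μ/(1−μ²))(ΛAΛAΣ + ΣAΛAΛ) = ΛCΛ, where C = (1/S)(AΣA + Tr[AΣ]A + σ²A). -/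
/-!
All matrices involved are polynomials in the pairwise commuting `Λ`, `A` and `G⁻¹`, so the
equation can be checked in the commutative algebra they generate. There, writing `M = ΛA` and
`Σ = c Λ G⁻¹` with `c = (σ²/S)(1 + κ/S)`, the left-hand side collapses to
`c Λ M G⁻¹ (2(1-μ) - (1-μ)/(1+μ) M)`, and `G G⁻¹ = 1` turns this into
`c Λ M + (c/S) Λ M² G⁻¹`. The right-hand side is
`(c/S) Λ M² G⁻¹ + ((c Tr[M G⁻¹] + σ²)/S) Λ M`, and the choice of `κ` is exactly what makes `c (S - Tr[M G⁻¹]) = σ²`.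
-/

theorem Matrix.commute_nonsing_inv_left {n α : Type*} [Fintype n] [DecidableEq n] [CommRing α]
    {G X : Matrix n n α} (hG : IsUnit G) (h : Commute G X) : Commute G⁻¹ X := by
  obtain ⟨u, rfl⟩ := hG
  rw [Matrix.nonsing_inv_eq_ringInverse, Ring.inverse_unit]
  exact h.units_inv_left

theorem div_mul_one_add_div_mul_sub_eq {S t σ2 : ℝ} (hS : S ≠ 0) (ht : 1 - 1 / S * t ≠ 0) :
    σ2 / S * (1 + t / (1 - 1 / S * t) / S) * (S - t) = σ2 := by
  have hSt : S - t ≠ 0 := by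
    contrapose! ht
    rw [← sub_eq_zero.mp ht, one_div, inv_mul_cancel₀ hS, sub_self]
  rw [show (1 : ℝ) - 1 / S * t = (S - t) / S by field_simp]
  field_simp
  ring

section Lyapunov

variable {R : Type*} (μ S c t σ2 : ℝ) (l a g : R)

theorem momentum_lyapunov_identity [CommRing R] [Algebra ℝ R]
    (hμp : 1 + μ ≠ 0) (hμm : 1 - μ ≠ 0) (hS : S ≠ 0)
    (hinv : ((2 * (1 - μ)) • (1 : R) - ((1 - μ) / (1 + μ) + 1 / S) • (l * a)) * g = 1)
    (hc : c * (S - t) = σ2) :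
    (1 - μ) • (l * a * (c • (l * g)) + (c • (l * g)) * a * l)
      - ((1 + μ ^ 2) / (1 - μ ^ 2)) • (l * a * (c • (l * g)) * a * l)
      + (μ / (1 - μ ^ 2)) • (l * a * l * a * (c • (l * g)) + (c • (l * g)) * a * l * a * l)
    = l * ((1 / S) • (a * (c • (l * g)) * a + (c * t) • a + σ2 • a)) * l := by
  have key := congrArg (fun x => l * l * a * x) hinv
  simp only [sub_mul, mul_sub, smul_mul_assoc, mul_smul_comm, mul_one] at key
  simp only [smul_mul_assoc, mul_smul_comm, smul_add, mul_add, add_mul, smul_smul]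
  -- AC-normalize the monomials so that `key` and the goal share the same atoms
  simp only [mul_assoc, mul_comm, mul_left_comm, mul_one] at key ⊢
  linear_combination (norm := skip) c • key
  have hμ2 : 1 - μ ^ 2 ≠ 0 := by
    rw [show 1 - μ ^ 2 = (1 + μ) * (1 - μ) by ring]
    exact mul_ne_zero hμp hμm
  subst hc
  match_scalars <;> field_simp <;> ring

open scoped IsMulCommutative in
theorem momentum_lyapunov_identity_of_commute [Ring R] [Algebra ℝ R]
    (hla : Commute l a) (hlg : Commute l g) (hag : Commute a g)
    (hμp : 1 + μ ≠ 0) (hμm : 1 - μ ≠ 0) (hS : S ≠ 0)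
    (hinv : ((2 * (1 - μ)) • (1 : R) - ((1 - μ) / (1 + μ) + 1 / S) • (l * a)) * g = 1)
    (hc : c * (S - t) = σ2) :
    (1 - μ) • (l * a * (c • (l * g)) + (c • (l * g)) * a * l)
      - ((1 + μ ^ 2) / (1 - μ ^ 2)) • (l * a * (c • (l * g)) * a * l)
      + (μ / (1 - μ ^ 2)) • (l * a * l * a * (c • (l * g)) + (c • (l * g)) * a * l * a * l)
    = l * ((1 / S) • (a * (c • (l * g)) * a + (c * t) • a + σ2 • a)) * l := by
  have : IsMulCommutative (Algebra.adjoin ℝ {l, a, g}) := by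
    refine Algebra.isMulCommutative_adjoin ℝ ?_
    simp only [Set.mem_insert_iff, Set.mem_singleton_iff]
    rintro x (rfl | rfl | rfl) y (rfl | rfl | rfl) <;>
      first | rfl | assumption | exact Eq.symm ‹_›
  have h := momentum_lyapunov_identity μ S c t σ2
    (⟨l, Algebra.subset_adjoin (by simp)⟩ : Algebra.adjoin ℝ {l, a, g})
    ⟨a, Algebra.subset_adjoin (by simp)⟩ ⟨g, Algebra.subset_adjoin (by simp)⟩ hμp hμm hS
    (Subtype.ext (by simpa using hinv)) hc
  simpa using congrArg Subtype.val h

end Lyapunov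

theorem stmt5_general (D : ℕ) (A Λ : Matrix (Fin D) (Fin D) ℝ)
    (hcomm : A * Λ = Λ * A)
    (μ S σ2 : ℝ) (hμ0 : 0 ≤ μ) (hμ1 : μ < 1) (hS : 1 ≤ S)
    (G : Matrix (Fin D) (Fin D) ℝ)
    (hG : G = (2 * (1 - μ)) • (1 : Matrix (Fin D) (Fin D) ℝ)
      - ((1 - μ) / (1 + μ) + 1 / S) • (Λ * A))
    (hGpos : G.PosDef)
    (hden : 0 < 1 - (1 / S) * (Λ * A * G⁻¹).trace)
    (κ : ℝ)
    (hκ : κ = (Λ * A * G⁻¹).trace / (1 - (1 / S) * (Λ * A * G⁻¹).trace))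
    (Sig : Matrix (Fin D) (Fin D) ℝ)
    (hSig : Sig = (σ2 / S * (1 + κ / S)) • (Λ * G⁻¹))
    (C : Matrix (Fin D) (Fin D) ℝ)
    (hC : C = (1 / S) • (A * Sig * A + (A * Sig).trace • A + σ2 • A)) :
    (1 - μ) • (Λ * A * Sig + Sig * A * Λ)
      - ((1 + μ ^ 2) / (1 - μ ^ 2)) • (Λ * A * Sig * A * Λ)
      + (μ / (1 - μ ^ 2)) • (Λ * A * Λ * A * Sig + Sig * A * Λ * A * Λ)
    = Λ * C * Λ := by
  have hS0 : S ≠ 0 := (zero_lt_one.trans_le hS).ne'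
  have hGunit : IsUnit G := hGpos.isUnit
  have hcommG : ∀ X, Commute (Λ * A) X → Commute G X := fun X hX => by
    rw [hG]
    exact ((Commute.one_left X).smul_left _).sub_left (hX.smul_left _)
  have hΛA : Commute Λ A := (hcomm : Commute A Λ).symm
  have hΛG : Commute Λ G⁻¹ := (Matrix.commute_nonsing_inv_left hGunit
    (hcommG Λ ((Commute.refl Λ).mul_left hΛA.symm))).symm
  have hAG : Commute A G⁻¹ := (Matrix.commute_nonsing_inv_left hGunit
    (hcommG A (hΛA.mul_left (Commute.refl A)))).symm
  have hinv : G * G⁻¹ = 1 :=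
    Matrix.mul_nonsing_inv G ((Matrix.isUnit_iff_isUnit_det G).mp hGunit)
  have htrace : (A * Sig).trace = σ2 / S * (1 + κ / S) * (Λ * A * G⁻¹).trace := by
    rw [hSig, Matrix.mul_smul, Matrix.trace_smul, smul_eq_mul, ← mul_assoc, hcomm]
  rw [hC, htrace, hSig]
  nth_rw 1 [hG] at hinv
  exact momentum_lyapunov_identity_of_commute μ S _ _ σ2 Λ A G⁻¹ hΛA hΛG hAG (by linarith)
    (by linarith) hS0 hinv (hκ ▸ div_mul_one_add_div_mul_sub_eq hS0 hden.ne')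

/-- The stationary covariance of discrete-time SGD with momentum on linear
regression with label noise solves the generalized Lyapunov equation. -/
theorem stmt5 (D : ℕ) (A Λ : Matrix (Fin D) (Fin D) ℝ)
    (hA : A.PosDef) (hΛ : Λ.PosDef) (hcomm : A * Λ = Λ * A)
    (μ S σ2 : ℝ) (hμ0 : 0 ≤ μ) (hμ1 : μ < 1) (hS : 1 ≤ S) (hσ : 0 < σ2)
    (G : Matrix (Fin D) (Fin D) ℝ)
    (hG : G = (2 * (1 - μ)) • (1 : Matrix (Fin D) (Fin D) ℝ)
      - ((1 - μ) / (1 + μ) + 1 / S) • (Λ * A))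
    (hGpos : G.PosDef)
    (hden : 0 < 1 - (1 / S) * (Λ * A * G⁻¹).trace)
    (κ : ℝ)
    (hκ : κ = (Λ * A * G⁻¹).trace / (1 - (1 / S) * (Λ * A * G⁻¹).trace))
    (Sig : Matrix (Fin D) (Fin D) ℝ)
    (hSig : Sig = (σ2 / S * (1 + κ / S)) • (Λ * G⁻¹))
    (C : Matrix (Fin D) (Fin D) ℝ)
    (hC : C = (1 / S) • (A * Sig * A + (A * Sig).trace • A + σ2 • A)) :
    (1 - μ) • (Λ * A * Sig + Sig * A * Λ)
      - ((1 + μ ^ 2) / (1 - μ ^ 2)) • (Λ * A * Sig * A * Λ)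
      + (μ / (1 - μ ^ 2)) • (Λ * A * Λ * A * Sig + Sig * A * Λ * A * Λ)
    = Λ * C * Λ :=
  stmt5_general D A Λ hcomm μ S σ2 hμ0 hμ1 hS G hG hGpos hden κ hκ Sig hSig C hC
end

section
/- For 1d SGD on linear regression with label noise, the divergence boundary of the stationary variance in the (λ, S) plane is S = 2aλ/(2 − aλ): the stationary variance Σ = λσ²/(S(2 − λa) − 2λa) is positive and finite if and only if S(2 − λa) > 2λa, equivalently λa < 2S/(S+2). -/
/-- Divergence boundary of the 1d stationary variance in the (λ, S) plane. -/
theorem stmt7 (a lam S σ2 : ℝ) (ha : 0 < a) (hlam : 0 < lam) (hS : 1 ≤ S) (hσ : 0 < σ2)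
    (Sig : ℝ) (hSig : Sig = lam * σ2 / (S * (2 - lam * a) - 2 * lam * a)) :
    (0 < Sig ↔ S * (2 - lam * a) > 2 * lam * a) ∧
    (S * (2 - lam * a) > 2 * lam * a ↔ lam * a < 2 * S / (S + 2)) := by
  have hnum : 0 < lam * σ2 := mul_pos hlam hσ
  have hS2 : 0 < S + 2 := by linarith
  constructor
  · rw [hSig]
    constructor
    · intro h
      by_contra hc
      push_neg at hc
      have : S * (2 - lam * a) - 2 * lam * a ≤ 0 := by linarith
      have := div_nonpos_of_nonneg_of_nonpos hnum.le this
      linarith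
    · intro h
      exact div_pos hnum (by linarith)
  · rw [lt_div_iff₀ hS2]
    constructor <;> intro h <;> nlinarith
end

section
/- Let â_1,...,â_D > 0 and define W ∈ ℝ^{D×D} by W_{kl} = (1−λâ_k)²δ_{kl} + (λ²/S)â_kâ_l(1−δ_{kl}). If the operator norm ‖W‖ < 1, then |âᵀWâ| ≤ ‖â‖², which implies λ·((S−1)/S)∑_k â_k⁴ + (λ/S)(∑_k â_k²)² ≤ 2∑_k â_k³, where â = (â_1,...,â_D)ᵀ. -/
/-!
Since `‖W‖ < 1`, Cauchy–Schwarz gives `|âᵀWâ| ≤ ‖W‖‖â‖² ≤ ‖â‖²`. Expanding the quadratic form,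
`âᵀWâ = ∑ (1 - λâₖ)²âₖ² + (λ²/S)((∑ âₖ²)² - ∑ âₖ⁴)`, and after cancelling `∑ âₖ²` the bound
`âᵀWâ ≤ ‖â‖²` is `λ` times the stated inequality.
-/

open Finset

section QuadraticForm

variable {n : Type*} [Fintype n] [DecidableEq n]

theorem abs_sum_sum_mul_mul_le_opNorm_mul (A : Matrix n n ℝ) (x : n → ℝ) :
    |∑ k, ∑ l, x k * A k l * x l| ≤ ‖Matrix.toEuclideanCLM (𝕜 := ℝ) A‖ * ∑ k, x k ^ 2 := by
  set v : EuclideanSpace ℝ n := WithLp.toLp 2 x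
  have hnorm_sq : ‖v‖ ^ 2 = ∑ k, x k ^ 2 := by
    rw [EuclideanSpace.norm_sq_eq]
    simp [v]
  have hinner : inner ℝ v (Matrix.toEuclideanCLM (𝕜 := ℝ) A v) = ∑ k, ∑ l, x k * A k l * x l := by
    simp only [v, PiLp.inner_apply, Matrix.toEuclideanCLM_toLp, Matrix.mulVec, dotProduct,
      RCLike.inner_apply, conj_trivial, sum_mul]
    exact sum_congr rfl fun k _ => sum_congr rfl fun l _ => by ring
  rw [← hinner, ← hnorm_sq]
  calc |inner ℝ v (Matrix.toEuclideanCLM (𝕜 := ℝ) A v)|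
      ≤ ‖v‖ * ‖Matrix.toEuclideanCLM (𝕜 := ℝ) A v‖ := abs_real_inner_le_norm _ _
    _ ≤ ‖v‖ * (‖Matrix.toEuclideanCLM (𝕜 := ℝ) A‖ * ‖v‖) := by
      gcongr
      exact (Matrix.toEuclideanCLM (𝕜 := ℝ) A).le_opNorm v
    _ = ‖Matrix.toEuclideanCLM (𝕜 := ℝ) A‖ * ‖v‖ ^ 2 := by ring

theorem sum_sum_mul_ite_mul (d : n → ℝ) (c : ℝ) (x : n → ℝ) :
    ∑ k, ∑ l, x k * (if k = l then d k else c * x k * x l) * x l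
      = ∑ k, d k * x k ^ 2 + c * ((∑ k, x k ^ 2) ^ 2 - ∑ k, x k ^ 4) := by
  have hterm : ∀ k l, x k * (if k = l then d k else c * x k * x l) * x l
      = c * (x k ^ 2 * x l ^ 2) + if k = l then d k * x k ^ 2 - c * x k ^ 4 else 0 := by
    intro k l
    split_ifs with h
    · subst h; ring
    · ring
  simp only [hterm, sum_add_distrib, sum_ite_eq, mem_univ, if_true, ← mul_sum, ← sum_mul,
    sum_sub_distrib]
  ring

end QuadraticForm

theorem sum_one_sub_mul_sq_mul_sq {n : Type*} [Fintype n] (lam : ℝ) (x : n → ℝ) :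
    ∑ k, (1 - lam * x k) ^ 2 * x k ^ 2
      = ∑ k, x k ^ 2 - 2 * lam * ∑ k, x k ^ 3 + lam ^ 2 * ∑ k, x k ^ 4 := by
  simp only [mul_sum, ← sum_sub_distrib, ← sum_add_distrib]
  exact sum_congr rfl fun k _ => by ring

theorem stability_condition_of_le {lam S A B C : ℝ} (hlam : 0 < lam) (hS : 0 < S)
    (h : A - 2 * lam * B + lam ^ 2 * C + lam ^ 2 / S * (A ^ 2 - C) ≤ A) :
    lam * ((S - 1) / S) * C + lam / S * A ^ 2 ≤ 2 * B := by
  have hscaled : lam * (lam * ((S - 1) / S) * C + lam / S * A ^ 2 - 2 * B)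
      = A - 2 * lam * B + lam ^ 2 * C + lam ^ 2 / S * (A ^ 2 - C) - A := by
    field_simp
    ring
  have : lam * (lam * ((S - 1) / S) * C + lam / S * A ^ 2 - 2 * B) ≤ 0 := by
    rw [hscaled]
    linarith
  linarith [nonpos_of_mul_nonpos_right this hlam]

theorem stmt11_general (D : ℕ) (S lam : ℝ) (hS : 1 ≤ S) (hlam : 0 < lam)
    (ahat : Fin D → ℝ)
    (W : Matrix (Fin D) (Fin D) ℝ)
    (hW : W = Matrix.of fun k l =>
      if k = l then (1 - lam * ahat k) ^ 2 else (lam ^ 2 / S) * ahat k * ahat l)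
    (hnorm : ‖Matrix.toEuclideanCLM (𝕜 := ℝ) W‖ < 1) :
    |∑ k, ∑ l, ahat k * W k l * ahat l| ≤ (∑ k, ahat k ^ 2) ∧
    lam * ((S - 1) / S) * (∑ k, ahat k ^ 4) + (lam / S) * (∑ k, ahat k ^ 2) ^ 2
      ≤ 2 * (∑ k, ahat k ^ 3) := by
  have hbound : |∑ k, ∑ l, ahat k * W k l * ahat l| ≤ ∑ k, ahat k ^ 2 :=
    (abs_sum_sum_mul_mul_le_opNorm_mul W ahat).trans <|
      mul_le_of_le_one_left (sum_nonneg fun k _ => sq_nonneg _) hnorm.le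
  refine ⟨hbound, ?_⟩
  have hexpand := sum_sum_mul_ite_mul (fun k => (1 - lam * ahat k) ^ 2) (lam ^ 2 / S) ahat
  rw [sum_one_sub_mul_sq_mul_sq] at hexpand
  have hquad := (le_abs_self _).trans hbound
  simp only [hW, Matrix.of_apply, hexpand] at hquad
  exact stability_condition_of_le hlam (zero_lt_one.trans_le hS) hquad

/-- If the operator norm of the stability matrix `W` is below one, then
`|âᵀWâ| ≤ ‖â‖²`, which implies the stability necessary condition. -/
theorem stmt11 (D : ℕ) (S lam : ℝ) (hS : 1 ≤ S) (hlam : 0 < lam)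
    (ahat : Fin D → ℝ) (hpos : ∀ k, 0 < ahat k)
    (W : Matrix (Fin D) (Fin D) ℝ)
    (hW : W = Matrix.of fun k l =>
      if k = l then (1 - lam * ahat k) ^ 2 else (lam ^ 2 / S) * ahat k * ahat l)
    (hnorm : ‖Matrix.toEuclideanCLM (𝕜 := ℝ) W‖ < 1) :
    |∑ k, ∑ l, ahat k * W k l * ahat l| ≤ (∑ k, ahat k ^ 2) ∧
    lam * ((S - 1) / S) * (∑ k, ahat k ^ 4) + (lam / S) * (∑ k, ahat k ^ 2) ^ 2
      ≤ 2 * (∑ k, ahat k ^ 3) :=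
  stmt11_general D S lam hS hlam ahat W hW hnorm
end

section
/- For 1d SGD with L₂ regularization of strength γ, curvature a > 0, learning rate λ > 0, and batch size S, the test loss is L_test = [aγ²/(2(a+γ))] · [2 − λ(a+γ)] / [2(a+γ) − λ((a+γ)² + (2/S)a²)] · u², and the training loss is L_train = [aγ/(2(a+γ))] · [2(a+γ) − λ((a+γ)² + (2/S)a(a−γ))] / [2(a+γ) − λ((a+γ)² + (2/S)a²)] · u², assuming the denominator 2(a+γ) − λ((a+γ)² + (2/S)a²) > 0. -/
/-!
The fluctuation–dissipation equation is linear in the stationary variance `Sig`, so it determines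
`Sig = (2λ/S) a² γ² u² / ((a + γ)² D)`, where `D = 2(a + γ) − λ((a + γ)² + (2/S) a²)`.
Each loss is its value at the regularized minimum `w* = a u / (a + γ)` plus a multiple of `Sig`:
`a γ u² / (2(a + γ)) + (a + γ) Sig / 2` for training and `a γ² u² / (2(a + γ)²) + a Sig / 2` for
testing. Over the common denominator `D`, the noise term turns `D` into `D + (2λ/S) a γ` for the
training loss and into `D + (2λ/S) a² = (a + γ)(2 − λ(a + γ))` for the test loss.
-/

namespace RegularizedSGD1d

noncomputable def denom (a γ lam S : ℝ) : ℝ := 2 * (a + γ) - lam * ((a + γ) ^ 2 + (2 / S) * a ^ 2)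

variable {a γ lam S u Sig : ℝ}

lemma stationaryVariance_eq (hD : denom a γ lam S ≠ 0)
    (hSig : 2 * (a + γ) * Sig - lam * (a + γ) ^ 2 * Sig - (2 * lam / S) * a ^ 2 * Sig
      = (2 * lam / S) * a ^ 2 * γ ^ 2 * u ^ 2 / (a + γ) ^ 2) :
    Sig = (2 * lam / S) * a ^ 2 * γ ^ 2 * u ^ 2 / (a + γ) ^ 2 / denom a γ lam S := by
  rw [eq_div_iff hD, denom]
  linear_combination hSig

lemma trainLoss_eq (hk : a + γ ≠ 0) (hD : denom a γ lam S ≠ 0)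
    (hSig : Sig = (2 * lam / S) * a ^ 2 * γ ^ 2 * u ^ 2 / (a + γ) ^ 2 / denom a γ lam S) :
    (a + γ) * Sig / 2 + a * γ * u ^ 2 / (2 * (a + γ))
      = a * γ / (2 * (a + γ))
        * ((2 * (a + γ) - lam * ((a + γ) ^ 2 + (2 / S) * a * (a - γ))) / denom a γ lam S)
        * u ^ 2 := by
  subst hSig
  field_simp
  rw [denom]
  ring

lemma testLoss_eq (hk : a + γ ≠ 0) (hD : denom a γ lam S ≠ 0)
    (hSig : Sig = (2 * lam / S) * a ^ 2 * γ ^ 2 * u ^ 2 / (a + γ) ^ 2 / denom a γ lam S) :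
    a * Sig / 2 + a * γ ^ 2 * u ^ 2 / (2 * (a + γ) ^ 2)
      = a * γ ^ 2 / (2 * (a + γ)) * ((2 - lam * (a + γ)) / denom a γ lam S) * u ^ 2 := by
  subst hSig
  field_simp
  rw [denom]
  ring

end RegularizedSGD1d

open RegularizedSGD1d in
theorem stmt13_general (a γ lam S u : ℝ)
    (hk : a + γ ≠ 0)
    (hden : 0 < 2 * (a + γ) - lam * ((a + γ) ^ 2 + (2 / S) * a ^ 2))
    (Sig : ℝ)
    (hSig : 2 * (a + γ) * Sig - lam * (a + γ) ^ 2 * Sig - (2 * lam / S) * a ^ 2 * Sig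
      = (2 * lam / S) * a ^ 2 * γ ^ 2 * u ^ 2 / (a + γ) ^ 2) :
    ((a + γ) * Sig / 2 + a * γ * u ^ 2 / (2 * (a + γ))
      = a * γ / (2 * (a + γ))
        * ((2 * (a + γ) - lam * ((a + γ) ^ 2 + (2 / S) * a * (a - γ)))
          / (2 * (a + γ) - lam * ((a + γ) ^ 2 + (2 / S) * a ^ 2))) * u ^ 2) ∧
    (a * Sig / 2 + a * γ ^ 2 * u ^ 2 / (2 * (a + γ) ^ 2)
      = a * γ ^ 2 / (2 * (a + γ))
        * ((2 - lam * (a + γ))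
          / (2 * (a + γ) - lam * ((a + γ) ^ 2 + (2 / S) * a ^ 2))) * u ^ 2) := by
  have hD : denom a γ lam S ≠ 0 := hden.ne'
  have hSig' := stationaryVariance_eq hD hSig
  exact ⟨trainLoss_eq hk hD hSig', testLoss_eq hk hD hSig'⟩

/-- 1d SGD with L₂ regularization: closed forms of training and test loss. -/
theorem stmt13 (a γ lam S u : ℝ) (ha : 0 < a) (hlam : 0 < lam) (hS : 1 ≤ S)
    (hk : a + γ ≠ 0)
    (hden : 0 < 2 * (a + γ) - lam * ((a + γ) ^ 2 + (2 / S) * a ^ 2))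
    (Sig : ℝ)
    (hSig : 2 * (a + γ) * Sig - lam * (a + γ) ^ 2 * Sig - (2 * lam / S) * a ^ 2 * Sig
      = (2 * lam / S) * a ^ 2 * γ ^ 2 * u ^ 2 / (a + γ) ^ 2) :
    ((a + γ) * Sig / 2 + a * γ * u ^ 2 / (2 * (a + γ))
      = a * γ / (2 * (a + γ))
        * ((2 * (a + γ) - lam * ((a + γ) ^ 2 + (2 / S) * a * (a - γ)))
          / (2 * (a + γ) - lam * ((a + γ) ^ 2 + (2 / S) * a ^ 2))) * u ^ 2) ∧
    (a * Sig / 2 + a * γ ^ 2 * u ^ 2 / (2 * (a + γ) ^ 2)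
      = a * γ ^ 2 / (2 * (a + γ))
        * ((2 - lam * (a + γ))
          / (2 * (a + γ) - lam * ((a + γ) ^ 2 + (2 / S) * a ^ 2))) * u ^ 2) :=
  stmt13_general a γ lam S u hk hden Sig hSig
end
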